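/- For operators A₀, A₁ : C^n → C^m ⊗ C^k and vectors u₀, u₁ ∈ C^n ⊗ C^n (with W = C^n an auxiliary space), one has ‖Tr_Z((A₀ ⊗ 1_W) u₀ u₁* (A₁ ⊗ 1_W)*)‖₁ = F(Ψ₀(Tr_W(u₀u₀*)), Ψ₁(Tr_W(u₁u₁*))), where Ψ₀(X) = Tr_Y(A₀XA₀*) and Ψ₁(X) = Tr_Y(A₁XA₁*). -/

import Mathlib

open Matrix Kronecker
open scoped ComplexOrder

/-- Trace norm `‖A‖₁ = Tr √(Aᴴ A)` of a complex matrix. -/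
noncomputable def traceNorm {α β : Type*} [Fintype α] [Fintype β] [DecidableEq α] [DecidableEq β]
    (A : Matrix α β ℂ) : ℝ :=
  (((Matrix.posSemidef_conjTranspose_mul_self A).1.eigenvectorUnitary.1 *
      diagonal (((↑) : ℝ → ℂ) ∘ (√·) ∘ (Matrix.posSemidef_conjTranspose_mul_self A).1.eigenvalues) *
      (star (Matrix.posSemidef_conjTranspose_mul_self A).1.eigenvectorUnitary : Matrix β β ℂ)).trace).re

/-- Spectral norm (operator norm w.r.t. Euclidean norms). -/
noncomputable def specNorm {α β : Type*} [Fintype α] [Fintype β] [DecidableEq α] [DecidableEq β]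
    (A : Matrix α β ℂ) : ℝ :=
  ‖LinearMap.toContinuousLinearMap (Matrix.toEuclideanLin A)‖

/-- Frobenius norm. -/
noncomputable def frobNorm {α β : Type*} [Fintype α] [Fintype β]
    (A : Matrix α β ℂ) : ℝ :=
  Real.sqrt ((Aᴴ * A).trace.re)

/-- Positive semidefinite square root (junk value `0` off the PSD cone). -/
noncomputable def msqrt {α : Type*} [Fintype α] [DecidableEq α]
    (P : Matrix α α ℂ) : Matrix α α ℂ :=
  open scoped Classical in
  if h : P.PosSemidef then h.1.eigenvectorUnitary.1 * diagonal (((↑) : ℝ → ℂ) ∘ (√·) ∘ h.1.eigenvalues) *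
    (star h.1.eigenvectorUnitary : Matrix α α ℂ) else 0

/-- Fidelity `F(P,Q) = ‖√P √Q‖₁`. -/
noncomputable def fid {α : Type*} [Fintype α] [DecidableEq α]
    (P Q : Matrix α α ℂ) : ℝ :=
  traceNorm (msqrt P * msqrt Q)

/-- Partial trace over the second (right) tensor factor. -/
noncomputable def ptraceRight {a b : ℕ} (M : Matrix (Fin a × Fin b) (Fin a × Fin b) ℂ) :
    Matrix (Fin a) (Fin a) ℂ :=
  Matrix.of fun i j => ∑ s : Fin b, M (i, s) (j, s)

/-- Partial trace over the first (left) tensor factor. -/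
noncomputable def ptraceLeft {a b : ℕ} (M : Matrix (Fin a × Fin b) (Fin a × Fin b) ℂ) :
    Matrix (Fin b) (Fin b) ℂ :=
  Matrix.of fun i j => ∑ s : Fin a, M (s, i) (s, j)

/-- `Φ ⊗ id` acting on `L(Cⁿ ⊗ Cᵏ)`. -/
noncomputable def tensorId {n m k : ℕ}
    (Φ : Matrix (Fin n) (Fin n) ℂ → Matrix (Fin m) (Fin m) ℂ)
    (M : Matrix (Fin n × Fin k) (Fin n × Fin k) ℂ) :
    Matrix (Fin m × Fin k) (Fin m × Fin k) ℂ :=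
  Matrix.of fun p q => Φ (Matrix.of fun a c => M (a, p.2) (c, q.2)) p.1 q.1

/-- Completely bounded trace norm `¦¦¦Φ¦¦¦₁ = ‖Φ ⊗ id_{L(Cⁿ)}‖₁`. -/
noncomputable def cbTraceNorm {n m : ℕ}
    (Φ : Matrix (Fin n) (Fin n) ℂ → Matrix (Fin m) (Fin m) ℂ) : ℝ :=
  sSup {c : ℝ | ∃ M : Matrix (Fin n × Fin n) (Fin n × Fin n) ℂ,
    traceNorm M ≤ 1 ∧ c = traceNorm (tensorId Φ M)}

/-- Completely bounded spectral norm of `Ψ : L(Cᵐ) → L(Cⁿ)`, with ancilla `Cⁿ`. -/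
noncomputable def cbSpecNorm {m n : ℕ}
    (Ψ : Matrix (Fin m) (Fin m) ℂ → Matrix (Fin n) (Fin n) ℂ) : ℝ :=
  sSup {c : ℝ | ∃ M : Matrix (Fin m × Fin n) (Fin m × Fin n) ℂ,
    specNorm M ≤ 1 ∧ c = specNorm (tensorId Ψ M)}

/-- Choi–Jamiołkowski representation `J(Φ) = ∑ᵢⱼ Φ(Eᵢⱼ) ⊗ Eᵢⱼ`. -/
noncomputable def choi {n m : ℕ}
    (Φ : Matrix (Fin n) (Fin n) ℂ → Matrix (Fin m) (Fin m) ℂ) :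
    Matrix (Fin m × Fin n) (Fin m × Fin n) ℂ :=
  ∑ i : Fin n, ∑ j : Fin n, (Φ (Matrix.single i j 1)) ⊗ₖ (Matrix.single i j 1)

/-- vec mapping. -/
def vecM {n : ℕ} (A : Matrix (Fin n) (Fin n) ℂ) : Fin n × Fin n → ℂ := fun p => A p.1 p.2

/-- Partial trace over the middle factor of `(Y ⊗ Z) ⊗ W`. -/
noncomputable def ptraceMid {a b c : ℕ}
    (M : Matrix ((Fin a × Fin b) × Fin c) ((Fin a × Fin b) × Fin c) ℂ) :
    Matrix (Fin a × Fin c) (Fin a × Fin c) ℂ :=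
  Matrix.of fun p q => ∑ s : Fin b, M ((p.1, s), p.2) ((q.1, s), q.2)

/-!
Write `Uᵢ : Z → Y ⊗ W` for the vector `(Aᵢ ⊗ 1_W) uᵢ` reshaped into an operator. The left-hand side
is then `‖U₀ U₁*‖₁`, and `Ψᵢ(Tr_W(uᵢ uᵢ*)) = (Uᵢ* Uᵢ)ᵀ`. The trace norm of `X` only depends on
`X* X` and is invariant under adjoints and transposes, so with `Pᵢ = Uᵢ* Uᵢ`
`‖U₀ U₁*‖₁ = ‖√P₀ U₁*‖₁ = ‖U₁ √P₀‖₁ = ‖√P₁ √P₀‖₁ = F(P₁, P₀) = F(P₀, P₁) = F(P₀ᵀ, P₁ᵀ)`.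
Adjoint invariance, `Tr √(X* X) = Tr √(X X*)`, holds because `√` agrees on both spectra with a
polynomial `x q(x)`, and `X q(X* X) = q(X X*) X`.
-/

open Polynomial
open scoped MatrixOrder

theorem exists_polynomial_eqOn {F : Type*} [Field F] {s : Set F} (hs : s.Finite) (f : F → F) :
    ∃ p : F[X], s.EqOn p.eval f := by
  classical
  exact ⟨Lagrange.interpolate hs.toFinset id f, fun x hx =>
    Lagrange.eval_interpolate_at_node f Function.injective_id.injOn (hs.mem_toFinset.2 hx)⟩

theorem mul_aeval_eq_aeval_mul {R α ι κ : Type*} [CommSemiring R] [Semiring α] [Algebra R α]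
    [Fintype ι] [DecidableEq ι] [Fintype κ] [DecidableEq κ]
    {B : Matrix κ ι α} {M : Matrix ι ι α} {N : Matrix κ κ α} (h : B * M = N * B) (p : R[X]) :
    B * aeval M p = aeval N p * B := by
  induction p using Polynomial.induction_on' with
  | add f g hf hg => rw [map_add, map_add, Matrix.mul_add, Matrix.add_mul, hf, hg]
  | monomial j a =>
    have hpow : B * M ^ j = N ^ j * B := by
      induction j with
      | zero => simp
      | succ j ih => rw [pow_succ, pow_succ, ← Matrix.mul_assoc, ih, Matrix.mul_assoc, h,
          Matrix.mul_assoc]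
    simp only [aeval_monomial, Algebra.algebraMap_eq_smul_one, Matrix.smul_mul, Matrix.mul_smul,
      one_mul, hpow]

theorem cfc_eq_aeval_of_eqOn {A : Type*} [Ring A] [StarRing A] [Algebra ℝ A] [TopologicalSpace A]
    [ContinuousFunctionalCalculus ℝ A IsSelfAdjoint] {a : A} (ha : IsSelfAdjoint a) {f : ℝ → ℝ}
    {p : ℝ[X]} (h : (spectrum ℝ a).EqOn p.eval f) : cfc f a = aeval a p := by
  rw [← cfc_congr h, cfc_polynomial p a]

section TraceNorm

variable {ι κ α : Type*} [Fintype ι] [DecidableEq ι] [Fintype κ] [DecidableEq κ]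
  [Fintype α] [DecidableEq α]

theorem trace_cfc_conjTranspose_mul_self (A : Matrix ι κ ℂ) {f : ℝ → ℝ} (hf : f 0 = 0) :
    (cfc f (Aᴴ * A)).trace = (cfc f (A * Aᴴ)).trace := by
  have hS : (insert 0 (spectrum ℝ (Aᴴ * A) ∪ spectrum ℝ (A * Aᴴ))).Finite :=
    ((Aᴴ * A).finite_real_spectrum.union (A * Aᴴ).finite_real_spectrum).insert 0
  obtain ⟨p, hp⟩ := exists_polynomial_eqOn hS f
  obtain ⟨q, rfl⟩ : X ∣ p := by
    rw [X_dvd_iff, coeff_zero_eq_eval_zero]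
    exact (hp (Set.mem_insert 0 _)).trans hf
  have hint : A * aeval (Aᴴ * A) q = aeval (A * Aᴴ) q * A :=
    mul_aeval_eq_aeval_mul (by simp only [Matrix.mul_assoc]) q
  calc (cfc f (Aᴴ * A)).trace = (Aᴴ * (A * aeval (Aᴴ * A) q)).trace := by
        rw [cfc_eq_aeval_of_eqOn (isHermitian_conjTranspose_mul_self A).isSelfAdjoint
          (hp.mono (by grind)), map_mul, aeval_X, Matrix.mul_assoc]
    _ = (A * Aᴴ * aeval (A * Aᴴ) q).trace := by
        rw [hint, ← Matrix.mul_assoc, trace_mul_comm, Matrix.mul_assoc]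
    _ = (cfc f (A * Aᴴ)).trace := by
        rw [cfc_eq_aeval_of_eqOn (isHermitian_mul_conjTranspose_self A).isSelfAdjoint
          (hp.mono (by grind)), map_mul, aeval_X]

theorem msqrt_eq_sqrt {P : Matrix ι ι ℂ} (hP : P.PosSemidef) : msqrt P = CFC.sqrt P := by
  rw [msqrt, dif_pos hP, CFC.sqrt_eq_cfc, cfc_nnreal_eq_real _ P hP.nonneg, hP.1.cfc_eq,
    IsHermitian.cfc, Unitary.conjStarAlgAut_apply]
  simp only [Real.sqrt]
  rfl

theorem sqrt_eq_cfc_real_sqrt {P : Matrix ι ι ℂ} (hP : P.PosSemidef) :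
    CFC.sqrt P = cfc Real.sqrt P := by
  rw [CFC.sqrt_eq_real_sqrt P hP.nonneg, cfcₙ_eq_cfc]

theorem conjTranspose_sqrt (P : Matrix ι ι ℂ) : (CFC.sqrt P)ᴴ = CFC.sqrt P :=
  (CFC.sqrt_nonneg P).posSemidef.isHermitian.eq

theorem sqrt_transpose {P : Matrix ι ι ℂ} (hP : P.PosSemidef) : CFC.sqrt Pᵀ = (CFC.sqrt P)ᵀ :=
  CFC.sqrt_unique (by rw [← transpose_mul, CFC.sqrt_mul_sqrt_self P hP.nonneg])
    (CFC.sqrt_nonneg P).posSemidef.transpose.nonneg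

theorem traceNorm_eq_trace_sqrt (A : Matrix ι κ ℂ) :
    traceNorm A = (CFC.sqrt (Aᴴ * A)).trace.re := by
  rw [← msqrt_eq_sqrt (posSemidef_conjTranspose_mul_self A), msqrt,
    dif_pos (posSemidef_conjTranspose_mul_self A)]
  rfl

theorem traceNorm_eq_of_conjTranspose_mul_self_eq {A : Matrix ι κ ℂ} {B : Matrix α κ ℂ}
    (h : Aᴴ * A = Bᴴ * B) : traceNorm A = traceNorm B := by
  rw [traceNorm_eq_trace_sqrt, traceNorm_eq_trace_sqrt, h]

theorem traceNorm_conjTranspose (A : Matrix ι κ ℂ) : traceNorm Aᴴ = traceNorm A := by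
  rw [traceNorm_eq_trace_sqrt, traceNorm_eq_trace_sqrt, conjTranspose_conjTranspose,
    sqrt_eq_cfc_real_sqrt (posSemidef_self_mul_conjTranspose A),
    sqrt_eq_cfc_real_sqrt (posSemidef_conjTranspose_mul_self A),
    trace_cfc_conjTranspose_mul_self A Real.sqrt_zero]

theorem traceNorm_transpose (A : Matrix ι κ ℂ) : traceNorm Aᵀ = traceNorm A := by
  rw [traceNorm_eq_trace_sqrt, ← traceNorm_conjTranspose A, traceNorm_eq_trace_sqrt,
    conjTranspose_conjTranspose, conjTranspose_transpose_eq_transpose_conjTranspose,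
    ← transpose_mul, sqrt_transpose (posSemidef_self_mul_conjTranspose A), trace_transpose]

theorem traceNorm_mul_conjTranspose_eq_sqrt (X : Matrix ι κ ℂ) (Y : Matrix α κ ℂ) :
    traceNorm (X * Yᴴ) = traceNorm (CFC.sqrt (Xᴴ * X) * Yᴴ) := by
  apply traceNorm_eq_of_conjTranspose_mul_self_eq
  calc (X * Yᴴ)ᴴ * (X * Yᴴ) = Y * (Xᴴ * X) * Yᴴ := by
        simp only [conjTranspose_mul, conjTranspose_conjTranspose, Matrix.mul_assoc]
    _ = Y * (CFC.sqrt (Xᴴ * X) * CFC.sqrt (Xᴴ * X)) * Yᴴ := by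
        rw [CFC.sqrt_mul_sqrt_self _ (posSemidef_conjTranspose_mul_self X).nonneg]
    _ = (CFC.sqrt (Xᴴ * X) * Yᴴ)ᴴ * (CFC.sqrt (Xᴴ * X) * Yᴴ) := by
        simp only [conjTranspose_mul, conjTranspose_conjTranspose, conjTranspose_sqrt,
          Matrix.mul_assoc]

theorem fid_comm {P Q : Matrix ι ι ℂ} (hP : P.PosSemidef) (hQ : Q.PosSemidef) :
    fid P Q = fid Q P := by
  rw [fid, fid, msqrt_eq_sqrt hP, msqrt_eq_sqrt hQ, ← traceNorm_conjTranspose, conjTranspose_mul,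
    conjTranspose_sqrt, conjTranspose_sqrt]

theorem fid_transpose {P Q : Matrix ι ι ℂ} (hP : P.PosSemidef) (hQ : Q.PosSemidef) :
    fid Pᵀ Qᵀ = fid P Q := by
  rw [fid_comm hP hQ, fid, fid, msqrt_eq_sqrt hP.transpose, msqrt_eq_sqrt hQ.transpose,
    msqrt_eq_sqrt hP, msqrt_eq_sqrt hQ, sqrt_transpose hP, sqrt_transpose hQ, ← transpose_mul,
    traceNorm_transpose]

theorem traceNorm_mul_conjTranspose_eq_fid (U₀ : Matrix ι κ ℂ) (U₁ : Matrix α κ ℂ) :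
    traceNorm (U₀ * U₁ᴴ) = fid (U₀ᴴ * U₀) (U₁ᴴ * U₁) := by
  have hP := posSemidef_conjTranspose_mul_self U₀
  have hQ := posSemidef_conjTranspose_mul_self U₁
  rw [fid_comm hP hQ, fid, msqrt_eq_sqrt hP, msqrt_eq_sqrt hQ, traceNorm_mul_conjTranspose_eq_sqrt,
    ← traceNorm_conjTranspose, conjTranspose_mul, conjTranspose_conjTranspose,
    traceNorm_mul_conjTranspose_eq_sqrt, conjTranspose_sqrt]

end TraceNorm

theorem mul_vecMulVec_star_mul_conjTranspose {R ι κ α : Type*} [CommSemiring R] [StarRing R]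
    [Fintype κ] (M : Matrix ι κ R) (N : Matrix α κ R) (x y : κ → R) :
    M * vecMulVec x (star y) * Nᴴ = vecMulVec (M *ᵥ x) (star (N *ᵥ y)) := by
  rw [mul_vecMulVec, vecMulVec_mul, star_mulVec]

theorem kronecker_one_mulVec_apply {R α β γ : Type*} [Semiring R] [Fintype β] [Fintype γ]
    [DecidableEq γ] (A : Matrix α β R) (u : β × γ → R) (i : α) (w : γ) :
    ((A ⊗ₖ (1 : Matrix γ γ R)) *ᵥ u) (i, w) = ∑ a, A i a * u (a, w) := by
  simp [mulVec, dotProduct, Fintype.sum_prod_type, one_apply]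

def reshapeMid {α β γ : Type*} (v : (α × β) × γ → ℂ) : Matrix (α × γ) β ℂ :=
  of fun p z => v ((p.1, z), p.2)

theorem ptraceMid_vecMulVec_star {a b c : ℕ} (v₀ v₁ : (Fin a × Fin b) × Fin c → ℂ) :
    ptraceMid (vecMulVec v₀ (star v₁)) = reshapeMid v₀ * (reshapeMid v₁)ᴴ := by
  ext p q
  simp [ptraceMid, reshapeMid, mul_apply, vecMulVec_apply]

theorem ptraceLeft_mul_ptraceRight_vecMulVec_star_mul_conjTranspose {n m k : ℕ}
    (A : Matrix (Fin m × Fin k) (Fin n) ℂ) (u : Fin n × Fin n → ℂ) :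
    ptraceLeft (A * ptraceRight (vecMulVec u (star u)) * Aᴴ) =
      ((reshapeMid ((A ⊗ₖ (1 : Matrix (Fin n) (Fin n) ℂ)) *ᵥ u))ᴴ *
        reshapeMid ((A ⊗ₖ (1 : Matrix (Fin n) (Fin n) ℂ)) *ᵥ u))ᵀ := by
  ext z z'
  simp only [ptraceLeft, ptraceRight, reshapeMid, of_apply, transpose_apply, mul_apply,
    conjTranspose_apply, kronecker_one_mulVec_apply, vecMulVec_apply, Pi.star_apply,
    RCLike.star_def, Fintype.sum_prod_type, map_sum, map_mul, Finset.mul_sum, Finset.sum_mul]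
  refine Finset.sum_congr rfl fun y _ => ?_
  rw [Finset.sum_comm]
  refine (Finset.sum_congr rfl fun a _ => Finset.sum_comm).trans ?_
  rw [Finset.sum_comm]
  exact Finset.sum_congr rfl fun s _ => Finset.sum_congr rfl fun a _ =>
    Finset.sum_congr rfl fun c _ => by ring

/-- key identity in the proof of Theorem 3.4. -/
theorem stmt17 {n m k : ℕ} (A₀ A₁ : Matrix (Fin m × Fin k) (Fin n) ℂ)
    (u₀ u₁ : Fin n × Fin n → ℂ) :
    traceNorm (ptraceMid
        ((A₀ ⊗ₖ (1 : Matrix (Fin n) (Fin n) ℂ)) * Matrix.vecMulVec u₀ (star u₁) *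
          (A₁ ⊗ₖ (1 : Matrix (Fin n) (Fin n) ℂ))ᴴ))
      = fid (ptraceLeft (A₀ * ptraceRight (Matrix.vecMulVec u₀ (star u₀)) * A₀ᴴ))
            (ptraceLeft (A₁ * ptraceRight (Matrix.vecMulVec u₁ (star u₁)) * A₁ᴴ)) := by
  rw [mul_vecMulVec_star_mul_conjTranspose, ptraceMid_vecMulVec_star,
    ptraceLeft_mul_ptraceRight_vecMulVec_star_mul_conjTranspose,
    ptraceLeft_mul_ptraceRight_vecMulVec_star_mul_conjTranspose,
    fid_transpose (posSemidef_conjTranspose_mul_self _) (posSemidef_conjTranspose_mul_self _)]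
  exact traceNorm_mul_conjTranspose_eq_fid _ _
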